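/- Assume the CR singularity of M at 0 is removable: there exist a neighborhood V' ⊆ V of 0 and real-analytic functions a, b : V' → ℂ with (a(z), b(z)) ≠ (0, 0) for all z ∈ V' and a·ρ_{z̄₁} + b·ρ_{z̄₂} ≡ 0 on V'. Then the fiber 𝒱₀ (the limit of the CR line bundle at 0) is a complex line; concretely, either there exists c ∈ ℂ such that ρ_{z̄₁}(z)/ρ_{z̄₂}(z) → c as z → 0 within the set {z ∈ V : ρ_{z̄₂}(z) ≠ 0}, or there exists c ∈ ℂ such that ρ_{z̄₂}(z)/ρ_{z̄₁}(z) → c as z → 0 within the set {z ∈ V : ρ_{z̄₁}(z) ≠ 0}. -/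
import Mathlib


open Complex Filter Topology Metric
open scoped ComplexConjugate

noncomputable section

/-- Wirtinger derivative `ρ_{z̄_j}` at `z` of a complex-valued function on `ℂ²`,
via the real Fréchet derivative. -/
def wbar (ρ : (Fin 2 → ℂ) → ℂ) (z : Fin 2 → ℂ) (j : Fin 2) : ℂ :=
  (1/2 : ℂ) * (fderiv ℝ ρ z (Pi.single j 1 : Fin 2 → ℂ) +
     Complex.I * fderiv ℝ ρ z (Complex.I • (Pi.single j 1 : Fin 2 → ℂ)))

/-- If the CR singularity at `0` of `M = {w = ρ(z,z̄)} ⊆ ℂ³` is removable, then the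
fiber `𝒱₀` is a complex line: one of the quotients of the Wirtinger derivatives has a
limit at `0`. -/
theorem removable_implies_complex_line
    (V : Set (Fin 2 → ℂ)) (hVo : IsOpen V) (hVc : IsConnected V)
    (h0V : (0 : Fin 2 → ℂ) ∈ V)
    (ρ : (Fin 2 → ℂ) → ℂ) (hρ : AnalyticOn ℝ ρ V)
    (h00 : wbar ρ 0 0 = 0) (h01 : wbar ρ 0 1 = 0)
    (hnv : ∀ W : Set (Fin 2 → ℂ), IsOpen W → (0 : Fin 2 → ℂ) ∈ W →
      ∃ z ∈ W ∩ V, wbar ρ z 0 ≠ 0 ∨ wbar ρ z 1 ≠ 0)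
    -- removability of the CR singularity at `0`
    (hrem : ∃ (V' : Set (Fin 2 → ℂ)) (a b : (Fin 2 → ℂ) → ℂ),
      IsOpen V' ∧ (0 : Fin 2 → ℂ) ∈ V' ∧ V' ⊆ V ∧
      AnalyticOn ℝ a V' ∧ AnalyticOn ℝ b V' ∧
      (∀ z ∈ V', ¬(a z = 0 ∧ b z = 0)) ∧
      (∀ z ∈ V', a z * wbar ρ z 0 + b z * wbar ρ z 1 = 0)) :
    (∃ c : ℂ, Tendsto (fun z => wbar ρ z 0 / wbar ρ z 1)
      (𝓝[{z | z ∈ V ∧ wbar ρ z 1 ≠ 0}] (0 : Fin 2 → ℂ)) (𝓝 c)) ∨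
    (∃ c : ℂ, Tendsto (fun z => wbar ρ z 1 / wbar ρ z 0)
      (𝓝[{z | z ∈ V ∧ wbar ρ z 0 ≠ 0}] (0 : Fin 2 → ℂ)) (𝓝 c)) := by
  obtain ⟨V', a, b, hV'o, h0V', hV'V, ha, hb, hab, heq⟩ := hrem
  have haC : ContinuousAt a 0 := (ha.continuousOn).continuousAt (hV'o.mem_nhds h0V')
  have hbC : ContinuousAt b 0 := (hb.continuousOn).continuousAt (hV'o.mem_nhds h0V')
  by_cases ha0 : a 0 = 0
  · -- then b 0 ≠ 0, right disjunct
    have hb0 : b 0 ≠ 0 := fun h => hab 0 h0V' ⟨ha0, h⟩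
    right
    refine ⟨-(a 0 / b 0), ?_⟩
    have hlim : Tendsto (fun z => -(a z / b z))
        (𝓝[{z | z ∈ V ∧ wbar ρ z 0 ≠ 0}] (0 : Fin 2 → ℂ)) (𝓝 (-(a 0 / b 0))) :=
      ((haC.div hbC hb0).neg).continuousWithinAt
    refine hlim.congr' ?_
    have hbne : ∀ᶠ z in 𝓝 (0 : Fin 2 → ℂ), b z ≠ 0 := hbC.eventually_ne hb0
    have hV'mem : ∀ᶠ z in 𝓝 (0 : Fin 2 → ℂ), z ∈ V' := hV'o.eventually_mem h0V'
    filter_upwards [nhdsWithin_le_nhds hbne, nhdsWithin_le_nhds hV'mem,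
      self_mem_nhdsWithin] with z hbz hzV' hzS
    have h1 : a z * wbar ρ z 0 + b z * wbar ρ z 1 = 0 := heq z hzV'
    have h0ne : wbar ρ z 0 ≠ 0 := hzS.2
    field_simp
    linear_combination -h1
  · -- a 0 ≠ 0, left disjunct
    left
    refine ⟨-(b 0 / a 0), ?_⟩
    have hlim : Tendsto (fun z => -(b z / a z))
        (𝓝[{z | z ∈ V ∧ wbar ρ z 1 ≠ 0}] (0 : Fin 2 → ℂ)) (𝓝 (-(b 0 / a 0))) :=
      ((hbC.div haC ha0).neg).continuousWithinAt
    refine hlim.congr' ?_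
    have hane : ∀ᶠ z in 𝓝 (0 : Fin 2 → ℂ), a z ≠ 0 := haC.eventually_ne ha0
    have hV'mem : ∀ᶠ z in 𝓝 (0 : Fin 2 → ℂ), z ∈ V' := hV'o.eventually_mem h0V'
    filter_upwards [nhdsWithin_le_nhds hane, nhdsWithin_le_nhds hV'mem,
      self_mem_nhdsWithin] with z haz hzV' hzS
    have h1 : a z * wbar ρ z 0 + b z * wbar ρ z 1 = 0 := heq z hzV'
    have h1ne : wbar ρ z 1 ≠ 0 := hzS.2
    field_simp
    linear_combination -h1
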